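/- Let P = {p₁, …, pₙ} (n > 1) be distinct points in ℝᵐ with the Euclidean norm and let x̄ be the minimizer of f(x) = max_i ‖x − pᵢ‖ with value r. Then there exists a subset Q ⊆ P with 2 ≤ |Q| ≤ m + 1 such that x̄ is also the minimizer of x ↦ max{‖x − q‖ : q ∈ Q}, with the same optimal value r (so the smallest enclosing ball of P is determined by at most m + 1 of its points). -/

import Mathlib

/-!
The centre `x̄` of the smallest enclosing ball lies in the convex hull of the points on the
boundary sphere: otherwise a vector `v` separating `x̄` from that hull satisfies
`⟪v, pᵢ - x̄⟫ > 0` for every boundary point, so moving `x̄` slightly along `v` brings it strictly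
closer to all of them while the interior points stay inside, contradicting minimality.
Conversely, if `c` lies in the convex hull of points all at distance `r` from it, then for every
`x` some such point `q` has `⟪x - c, c - q⟫ ≥ 0`, hence `‖x - q‖ ≥ ‖c - q‖ = r`; so `c` is the
centre of their smallest enclosing ball. Carathéodory's theorem cuts the boundary points down
to at most `m + 1`, and at least two are needed because `r > 0`.
-/

open Finset Filter Topology Function
open scoped InnerProductSpace

theorem sup'_norm_sub_pos {E ι : Type*} [NormedAddCommGroup E] {p : ι → E} {s : Finset ι}
    (hs : s.Nonempty) {i j : ι} (hi : i ∈ s) (hj : j ∈ s) (hij : p i ≠ p j) (x : E) :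
    0 < s.sup' hs fun k => ‖x - p k‖ := by
  by_contra! h
  have hx : ∀ k ∈ s, x = p k := fun k hk =>
    sub_eq_zero.1 (norm_le_zero_iff.1 ((le_sup' (fun k => ‖x - p k‖) hk).trans h))
  exact hij ((hx i hi).symm.trans (hx j hj))

section VectorSpace

variable {E ι : Type*} [AddCommGroup E] [Module ℝ E]

theorem one_lt_card_of_mem_convexHull_image {p : ι → E} {s : Finset ι} {x : E}
    (hx : x ∈ convexHull ℝ (p '' s)) (hne : ∀ i ∈ s, x ≠ p i) : 1 < #s := by
  obtain ⟨i, hi⟩ : s.Nonempty := by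
    contrapose! hx
    simp [hx]
  by_contra! hcard
  have hsub : p '' s ⊆ {p i} := by
    rintro _ ⟨j, hj, rfl⟩
    rw [card_le_one.1 hcard j hj i hi, Set.mem_singleton_iff]
  exact hne i hi (by simpa using convexHull_mono hsub hx)

theorem exists_subset_card_le_finrank_succ_of_mem_convexHull_image [FiniteDimensional ℝ E]
    {p : ι → E} {s : Finset ι} {x : E} (hx : x ∈ convexHull ℝ (p '' s)) :
    ∃ t ⊆ s, #t ≤ Module.finrank ℝ E + 1 ∧ x ∈ convexHull ℝ (p '' t) := by
  classical
  rw [convexHull_eq_union] at hx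
  simp only [Set.mem_iUnion] at hx
  obtain ⟨u, hus, hu, hxu⟩ := hx
  obtain ⟨q, hq⟩ : u.Nonempty := by
    contrapose! hxu
    simp [hxu]
  obtain ⟨i, -, -⟩ := hus hq
  have : Nonempty ι := ⟨i⟩
  refine ⟨u.image (invFunOn p s), fun i hi => ?_, ?_, ?_⟩
  · obtain ⟨q, hq, rfl⟩ := mem_image.1 hi
    exact invFunOn_mem (hus hq)
  · calc #(u.image (invFunOn p s)) ≤ #u := card_image_le
      _ ≤ Module.finrank ℝ E + 1 := by
        simpa using hu.card_le_finrank_succ.trans (Nat.add_le_add_right (Submodule.finrank_le _) 1)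
  · have hsec : Set.EqOn (fun q => p (invFunOn p s q)) id u := fun q hq => invFunOn_eq (hus hq)
    rwa [coe_image, Set.image_image, Set.image_congr hsec, Set.image_id]

end VectorSpace

section InnerProductSpace

variable {E ι : Type*} [NormedAddCommGroup E] [InnerProductSpace ℝ E]

theorem exists_mem_norm_sub_le_of_mem_convexHull {t : Set E} {c : E}
    (hc : c ∈ convexHull ℝ t) (x : E) : ∃ q ∈ t, ‖c - q‖ ≤ ‖x - q‖ := by
  obtain ⟨q, hq, hle⟩ := ((innerₛₗ ℝ (x - c)).concaveOn convex_univ).exists_le_of_mem_convexHull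
    (Set.subset_univ _) hc
  refine ⟨q, hq, ?_⟩
  have hinner : 0 ≤ ⟪x - c, c - q⟫_ℝ := by
    rw [inner_sub_right]
    exact sub_nonneg.2 hle
  rw [← sq_le_sq₀ (norm_nonneg _) (norm_nonneg _), ← sub_add_sub_cancel x c q, norm_add_sq_real]
  nlinarith [sq_nonneg ‖x - c‖]

theorem exists_forall_inner_pos_of_notMem_convexHull {t : Set E} (ht : t.Finite) {x : E}
    (hx : x ∉ convexHull ℝ t) : ∃ v : E, ∀ q ∈ t, 0 < ⟪v, q - x⟫_ℝ := by
  rcases t.eq_empty_or_nonempty with rfl | htne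
  · exact ⟨0, by simp⟩
  set K := convexHull ℝ t
  have hK : Convex ℝ K := convex_convexHull ℝ t
  obtain ⟨y, hyK, hy⟩ := exists_norm_eq_iInf_of_complete_convex
    (htne.mono (subset_convexHull ℝ t)) (ht.isCompact_convexHull (𝕜 := ℝ)).isComplete hK x
  have hproj := (norm_eq_iInf_iff_real_inner_le_zero hK hyK).1 hy
  have hyx : 0 < ‖y - x‖ := norm_sub_pos_iff.2 fun h => hx (h ▸ hyK)
  refine ⟨y - x, fun q hq => ?_⟩
  have h := hproj q (subset_convexHull ℝ t hq)
  have hflip : ⟪y - x, q - y⟫_ℝ = -⟪x - y, q - y⟫_ℝ := by rw [← inner_neg_left, neg_sub]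
  rw [← sub_add_sub_cancel q y x, inner_add_right, real_inner_self_eq_norm_sq, hflip]
  nlinarith

theorem eventually_norm_add_smul_sub_lt {x v q : E} (h : 0 < ⟪v, q - x⟫_ℝ) :
    ∀ᶠ t in 𝓝[>] (0 : ℝ), ‖x + t • v - q‖ < ‖x - q‖ := by
  have hsmall : ∀ᶠ t in 𝓝[>] (0 : ℝ), t * ‖v‖ ^ 2 < 2 * ⟪v, q - x⟫_ℝ :=
    nhdsWithin_le_nhds <| (Continuous.tendsto (by fun_prop) 0).eventually_lt_const
      (by simpa using h)
  filter_upwards [self_mem_nhdsWithin, hsmall] with t (ht : 0 < t) hts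
  rw [← sq_lt_sq₀ (norm_nonneg _) (norm_nonneg _), add_sub_right_comm, norm_add_sq_real,
    inner_smul_right, norm_smul, Real.norm_of_nonneg ht.le, ← neg_sub q x, inner_neg_left,
    real_inner_comm]
  nlinarith

theorem mem_convexHull_of_isMinOn_sup'_norm_sub {p : ι → E} {s : Finset ι} (hs : s.Nonempty)
    {c : E} (hmin : IsMinOn (fun x => s.sup' hs fun i => ‖x - p i‖) Set.univ c) :
    c ∈ convexHull ℝ (p '' ↑{i ∈ s | ‖c - p i‖ = s.sup' hs fun i => ‖c - p i‖}) := by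
  set r := s.sup' hs fun i => ‖c - p i‖
  by_contra hc
  obtain ⟨v, hv⟩ := exists_forall_inner_pos_of_notMem_convexHull
    ((finite_toSet _).image p) hc
  have hdescent : ∀ᶠ t in 𝓝[>] (0 : ℝ), ∀ i ∈ s, ‖c + t • v - p i‖ < r := by
    refine (eventually_all_finset s).2 fun i hi => ?_
    have hle : ‖c - p i‖ ≤ r := le_sup' (fun i => ‖c - p i‖) hi
    rcases hle.eq_or_lt with hir | hir
    · rw [← hir]
      exact eventually_norm_add_smul_sub_lt (hv _ ⟨i, mem_filter.2 ⟨hi, hir⟩, rfl⟩)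
    · refine nhdsWithin_le_nhds <|
        (Continuous.tendsto ?_ 0).eventually_lt_const (by simpa using hir)
      fun_prop
  obtain ⟨t, ht⟩ := hdescent.exists
  exact (hmin (Set.mem_univ (c + t • v))).not_gt ((sup'_lt_iff _).2 ht)

theorem isMinOn_sup'_norm_sub_of_mem_convexHull {p : ι → E} {s : Finset ι} (hs : s.Nonempty)
    {c : E} {r : ℝ} (hr : ∀ i ∈ s, ‖c - p i‖ = r) (hc : c ∈ convexHull ℝ (p '' s)) :
    IsMinOn (fun x => s.sup' hs fun i => ‖x - p i‖) Set.univ c := by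
  intro x _
  obtain ⟨_, ⟨i, hi, rfl⟩, hle⟩ := exists_mem_norm_sub_le_of_mem_convexHull hc x
  refine sup'_le _ _ fun j hj => le_sup'_of_le (fun k => ‖x - p k‖) hi ?_
  rwa [hr j hj, ← hr i hi]

end InnerProductSpace

/-- The smallest enclosing ball of a finite set of distinct points in ℝᵐ is
determined by a subset of at least 2 and at most m+1 of the points. -/
theorem smallest_enclosing_ball_determined_by_few_points
    (m n : ℕ) (hn : 1 < n) (p : Fin n → EuclideanSpace ℝ (Fin m))
    (hinj : Function.Injective p)
    (f : EuclideanSpace ℝ (Fin m) → ℝ)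
    (hf : f = fun x => Finset.univ.sup' (Finset.univ_nonempty_iff.2 ⟨⟨0, by omega⟩⟩)
      fun i => ‖x - p i‖)
    (xbar : EuclideanSpace ℝ (Fin m)) (hmin : IsMinOn f Set.univ xbar)
    (r : ℝ) (hr : r = f xbar) :
    ∃ (s : Finset (Fin n)) (hs : s.Nonempty),
      2 ≤ s.card ∧ s.card ≤ m + 1 ∧
      IsMinOn (fun x => s.sup' hs fun i => ‖x - p i‖) Set.univ xbar ∧
      (s.sup' hs fun i => ‖xbar - p i‖) = r := by
  subst hf
  obtain ⟨s, hsT, hcard, hxs⟩ :=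
    exists_subset_card_le_finrank_succ_of_mem_convexHull_image
      (mem_convexHull_of_isMinOn_sup'_norm_sub _ hmin)
  rw [finrank_euclideanSpace_fin] at hcard
  have htight : ∀ i ∈ s, ‖xbar - p i‖ = r := fun i hi => hr ▸ (mem_filter.1 (hsT hi)).2
  have hr0 : 0 < r := hr ▸ sup'_norm_sub_pos _ (mem_univ ⟨0, by omega⟩) (mem_univ ⟨1, hn⟩)
    (hinj.ne (by simp [Fin.ext_iff])) xbar
  have hs2 : 1 < #s := one_lt_card_of_mem_convexHull_image hxs fun i hi hxi =>
    hr0.ne' (by rw [← htight i hi, hxi, sub_self, norm_zero])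
  have hs : s.Nonempty := card_pos.1 (by omega)
  exact ⟨s, hs, hs2, hcard, isMinOn_sup'_norm_sub_of_mem_convexHull hs htight hxs,
    by rw [sup'_congr hs rfl htight, sup'_const]⟩
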